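/- arXiv:1905.12888 — 2 statements merged into one kernel-verified Lean document; each statement's English description precedes it below -/
import Mathlib

section
/- In a finite-horizon MDP, let π and π* be stochastic policies with π(a|s) > 0 for all s, a, let f : ℝ → ℝ be convex on [0,∞), and suppose the associated f-divergence satisfies the triangle inequality: for every finite nonempty set X and all probability distributions p, q, r on X that are strictly positive, D_f(p‖q) ≤ D_f(p‖r) + D_f(r‖q), where D_f(p‖q) = ∑_x q(x)·f(p(x)/q(x)). Assume additionally ρ₀(s) > 0, P(s'|s,a) > 0 and π*(a|s) > 0 for all s, s', a. Then the f-divergence between trajectory distributions is upper bounded by the expected per-state action-distribution divergence: ∑_τ ρ_π(τ)·f(ρ_{π*}(τ)/ρ_π(τ)) ≤ T · ∑_{s∈S} ρ_π(s) · ∑_{a∈A} π(a|s)·f(π*(a|s)/π(a|s)). -/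
noncomputable section

/-- Time-`t` state distribution of a policy `π` in a finite MDP:
`ρ_π^0 = ρ₀` and `ρ_π^{t+1}(s) = ∑_{s',a} ρ_π^t(s') · π(a|s') · P(s|s',a)`. -/
def stateDist {S A : Type*} [Fintype S] [Fintype A]
    (ρ₀ : S → ℝ) (P : S → A → S → ℝ) (π : S → A → ℝ) : ℕ → S → ℝ
  | 0 => ρ₀
  | t + 1 => fun s => ∑ s' : S, ∑ a : A, stateDist ρ₀ P π t s' * π s' a * P s' a s

/-- Average state distribution `ρ_π(s) = (1/T) ∑_{t=1}^T ρ_π^{t-1}(s)`. -/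
def avgStateDist {S A : Type*} [Fintype S] [Fintype A]
    (ρ₀ : S → ℝ) (P : S → A → S → ℝ) (π : S → A → ℝ) (T : ℕ) (s : S) : ℝ :=
  (1 / (T : ℝ)) * ∑ t ∈ Finset.range T, stateDist ρ₀ P π t s

/-- The state `s_{t-1}` preceding the `t`-th action in the trajectory
`τ = (s₀, a₁, s₁, …, a_T, s_T)`, encoded as `τ = (s₀, fun t => (a_{t+1}, s_{t+1}))`. -/
def prevState {S A : Type*} {T : ℕ} (τ : S × (Fin T → A × S)) (t : Fin T) : S :=
  if _h : (t : ℕ) = 0 then τ.1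
  else (τ.2 ⟨(t : ℕ) - 1, lt_of_le_of_lt (Nat.pred_le _) t.isLt⟩).2

/-- Probability of a trajectory `τ = (s₀, a₁, s₁, …, a_T, s_T)` induced by policy `π`:
`ρ_π(τ) = ρ₀(s₀) ∏_{t=1}^T π(a_t|s_{t-1}) P(s_t|s_{t-1},a_t)`. -/
def trajProb {S A : Type*} {T : ℕ}
    (ρ₀ : S → ℝ) (P : S → A → S → ℝ) (π : S → A → ℝ) (τ : S × (Fin T → A × S)) : ℝ :=
  ρ₀ τ.1 * ∏ t : Fin T,
    (π (prevState τ t) (τ.2 t).1 * P (prevState τ t) (τ.2 t).1 (τ.2 t).2)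

/-!
Both trajectory distributions factor as "first step, then the trajectory from the state
reached". Compare them through the hybrid that takes the first step under `π` and the rest
under `π*`: by the triangle inequality and the chain rule for such products, the trajectory
divergence from a start state is at most the action divergence there plus the expected
divergence of the remaining trajectories. Unrolling this over the horizon sums the action
divergences against the state distributions `ρ_π^t`, `t < T`, i.e. `T` times their average.
-/

open Finset

section FDivergence

variable {X Y : Type} [Fintype X] [Fintype Y]

def fDiv (f : ℝ → ℝ) (p q : X → ℝ) : ℝ :=
  ∑ x, q x * f (p x / q x)

def IsPosDist (p : X → ℝ) : Prop :=
  (∀ x, 0 < p x) ∧ ∑ x, p x = 1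

def FDivTriangle (f : ℝ → ℝ) : Prop :=
  ∀ (X : Type) [Fintype X] [Nonempty X], ∀ p q r : X → ℝ,
    (∀ x, 0 < p x) → (∀ x, 0 < q x) → (∀ x, 0 < r x) →
    ∑ x, p x = 1 → ∑ x, q x = 1 → ∑ x, r x = 1 →
    fDiv f p q ≤ fDiv f p r + fDiv f r q

def compProd (a : X → ℝ) (b : X → Y → ℝ) : X × Y → ℝ :=
  fun z => a z.1 * b z.1 z.2

theorem IsPosDist.nonempty {p : X → ℝ} (hp : IsPosDist p) : Nonempty X := by
  by_contra h
  have := hp.2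
  simp [not_nonempty_iff.mp h] at this

theorem isPosDist_comp_equiv (e : Y ≃ X) {p : X → ℝ} :
    IsPosDist (p ∘ e) ↔ IsPosDist p := by
  simp only [IsPosDist, Function.comp_apply, e.forall_congr_left, e.apply_symm_apply, e.sum_comp]

theorem IsPosDist.compProd {a : X → ℝ} {b : X → Y → ℝ} (ha : IsPosDist a)
    (hb : ∀ x, IsPosDist (b x)) : IsPosDist (compProd a b) :=
  ⟨fun z => mul_pos (ha.1 z.1) ((hb z.1).1 z.2), by
    simp only [_root_.compProd, Fintype.sum_prod_type, ← mul_sum, (hb _).2, mul_one, ha.2]⟩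

theorem FDivTriangle.le {f : ℝ → ℝ} (htri : FDivTriangle f) {p q r : X → ℝ}
    (hp : IsPosDist p) (hq : IsPosDist q) (hr : IsPosDist r) :
    fDiv f p q ≤ fDiv f p r + fDiv f r q :=
  have := hp.nonempty
  htri X p q r hp.1 hq.1 hr.1 hp.2 hq.2 hr.2

theorem fDiv_comp_equiv (f : ℝ → ℝ) (e : Y ≃ X) (p q : X → ℝ) :
    fDiv f (p ∘ e) (q ∘ e) = fDiv f p q :=
  e.sum_comp fun x => q x * f (p x / q x)

/-- At `w = 0` both sides vanish thanks to `0 / 0 = 0`, so no positivity is needed. -/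
theorem perspective_mul_right (f : ℝ → ℝ) (u v w : ℝ) :
    u * w * f (v * w / (u * w)) = w * (u * f (v / u)) := by
  rcases eq_or_ne w 0 with rfl | hw
  · simp
  · rw [mul_div_mul_right _ _ hw]
    ring

theorem fDiv_compProd_same_kernel (f : ℝ → ℝ) (a a' : X → ℝ) {b : X → Y → ℝ}
    (hb : ∀ x, ∑ y, b x y = 1) :
    fDiv f (compProd a' b) (compProd a b) = fDiv f a' a := by
  simp only [fDiv, compProd, Fintype.sum_prod_type, perspective_mul_right, ← sum_mul, hb,
    one_mul]

theorem fDiv_compProd_same_marginal (f : ℝ → ℝ) (a : X → ℝ) (b b' : X → Y → ℝ) :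
    fDiv f (compProd a b') (compProd a b) = ∑ x, a x * fDiv f (b' x) (b x) := by
  simp only [fDiv, compProd, Fintype.sum_prod_type, mul_sum]
  refine sum_congr rfl fun x _ => sum_congr rfl fun y _ => ?_
  rw [mul_comm (a x), mul_comm (a x), perspective_mul_right]

/-- Pass through the hybrid `compProd a b'` by the triangle inequality. -/
theorem fDiv_compProd_le {f : ℝ → ℝ} (htri : FDivTriangle f) {a a' : X → ℝ}
    {b b' : X → Y → ℝ} (ha : IsPosDist a) (ha' : IsPosDist a') (hb : ∀ x, IsPosDist (b x))
    (hb' : ∀ x, IsPosDist (b' x)) :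
    fDiv f (compProd a' b') (compProd a b) ≤ fDiv f a' a + ∑ x, a x * fDiv f (b' x) (b x) :=
  calc fDiv f (compProd a' b') (compProd a b)
      ≤ fDiv f (compProd a' b') (compProd a b') + fDiv f (compProd a b') (compProd a b) :=
        htri.le (ha'.compProd hb') (ha.compProd hb) (ha.compProd hb')
    _ = fDiv f a' a + ∑ x, a x * fDiv f (b' x) (b x) := by
        rw [fDiv_compProd_same_kernel f a a' fun x => (hb' x).2, fDiv_compProd_same_marginal]

end FDivergence

section Paths

variable {S A : Type}

def pathProb (k : S → A × S → ℝ) {T : ℕ} (s : S) (w : Fin T → A × S) : ℝ :=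
  ∏ t, k (prevState (s, w) t) (w t)

theorem prevState_cons_succ {T : ℕ} (s : S) (x : A × S) (w : Fin T → A × S) (t : Fin T) :
    prevState (s, (Fin.cons x w : Fin (T + 1) → A × S)) t.succ = prevState (x.2, w) t := by
  obtain ⟨_ | n, _⟩ := t <;> rfl

theorem pathProb_cons (k : S → A × S → ℝ) {T : ℕ} (s : S) (x : A × S) (w : Fin T → A × S) :
    pathProb k s (Fin.cons x w : Fin (T + 1) → A × S) = k s x * pathProb k x.2 w := by
  simp only [pathProb, Fin.prod_univ_succ, prevState_cons_succ, Fin.cons_succ, Fin.cons_zero]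
  rfl

theorem pathProb_comp_consEquiv (k : S → A × S → ℝ) (T : ℕ) (s : S) :
    pathProb k s ∘ Fin.consEquiv (fun _ : Fin (T + 1) => A × S) =
      compProd (k s) fun x => pathProb k x.2 :=
  funext fun z => pathProb_cons k s z.1 z.2

theorem pathProb_comp_funUnique (k : S → A × S → ℝ) (s : S) :
    pathProb k s ∘ (Equiv.funUnique (Fin 1) (A × S)).symm = k s := by
  funext x
  simp only [pathProb, Function.comp_apply, Fin.prod_univ_one, Equiv.funUnique_symm_apply]
  rfl

variable [Fintype S] [Fintype A] {k k' : S → A × S → ℝ}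

theorem isPosDist_pathProb (hk : ∀ s, IsPosDist (k s)) (T : ℕ) (s : S) :
    IsPosDist (pathProb k s (T := T)) := by
  induction T generalizing s with
  | zero => exact ⟨fun _ => by simp [pathProb], by simp [pathProb]⟩
  | succ T ih =>
    rw [← isPosDist_comp_equiv (Fin.consEquiv _), pathProb_comp_consEquiv]
    exact (hk s).compProd fun x => ih x.2

theorem fDiv_pathProb_one (f : ℝ → ℝ) (s : S) :
    fDiv f (pathProb k' s (T := 1)) (pathProb k s) = fDiv f (k' s) (k s) := by
  rw [← fDiv_comp_equiv f (Equiv.funUnique (Fin 1) (A × S)).symm, pathProb_comp_funUnique,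
    pathProb_comp_funUnique]

theorem fDiv_pathProb_succ_le {f : ℝ → ℝ} (htri : FDivTriangle f) (hk : ∀ s, IsPosDist (k s))
    (hk' : ∀ s, IsPosDist (k' s)) (T : ℕ) (s : S) :
    fDiv f (pathProb k' s (T := T + 1)) (pathProb k s) ≤
      fDiv f (k' s) (k s) + ∑ x, k s x * fDiv f (pathProb k' x.2 (T := T)) (pathProb k x.2) := by
  rw [← fDiv_comp_equiv f (Fin.consEquiv _), pathProb_comp_consEquiv, pathProb_comp_consEquiv]
  exact fDiv_compProd_le htri (hk s) (hk' s) (fun x => isPosDist_pathProb hk T x.2)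
    (fun x => isPosDist_pathProb hk' T x.2)

end Paths

section MDP

variable {S A : Type} [Fintype S] [Fintype A]

def stepKernel (π : S → A → ℝ) (P : S → A → S → ℝ) (s : S) : A × S → ℝ :=
  compProd (π s) (P s)

theorem stateDist_succ' (μ : S → ℝ) (P : S → A → S → ℝ) (π : S → A → ℝ) (t : ℕ) :
    stateDist μ P π (t + 1) = stateDist (stateDist μ P π 1) P π t := by
  induction t with
  | zero => rfl
  | succ t ih =>
    change (fun s => ∑ s', ∑ a, stateDist μ P π (t + 1) s' * π s' a * P s' a s) = _
    rw [ih]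
    rfl

theorem stateDist_nonneg {μ : S → ℝ} {P : S → A → S → ℝ} {π : S → A → ℝ}
    (hμ : ∀ s, 0 ≤ μ s) (hπ : ∀ s a, 0 ≤ π s a) (hP : ∀ s a s', 0 ≤ P s a s') (t : ℕ) (s : S) :
    0 ≤ stateDist μ P π t s := by
  induction t generalizing s with
  | zero => exact hμ s
  | succ t ih =>
    exact sum_nonneg fun s' _ => sum_nonneg fun a _ =>
      mul_nonneg (mul_nonneg (ih s') (hπ s' a)) (hP s' a s)

theorem sum_stateDist_one_mul (μ : S → ℝ) (P : S → A → S → ℝ) (π : S → A → ℝ) (g : S → ℝ) :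
    ∑ s', stateDist μ P π 1 s' * g s' = ∑ s, μ s * ∑ x, stepKernel π P s x * g x.2 := by
  simp only [stateDist, stepKernel, compProd, Fintype.sum_prod_type, sum_mul, mul_sum]
  rw [sum_comm]
  refine sum_congr rfl fun s _ => ?_
  rw [sum_comm]
  exact sum_congr rfl fun a _ => sum_congr rfl fun s' _ => by ring

theorem mul_sum_avgStateDist_mul (ρ₀ : S → ℝ) (P : S → A → S → ℝ) (π : S → A → ℝ) {T : ℕ}
    (hT : T ≠ 0) (c : S → ℝ) :
    (T : ℝ) * ∑ s, avgStateDist ρ₀ P π T s * c s =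
      ∑ t ∈ range T, ∑ s, stateDist ρ₀ P π t s * c s := by
  simp only [avgStateDist, mul_sum, sum_mul]
  rw [sum_comm]
  refine sum_congr rfl fun t _ => sum_congr rfl fun s _ => ?_
  field_simp

variable {π π' : S → A → ℝ} {P : S → A → S → ℝ}

theorem fDiv_stepKernel (f : ℝ → ℝ) (hP : ∀ s a, ∑ s', P s a s' = 1) (s : S) :
    fDiv f (stepKernel π' P s) (stepKernel π P s) = fDiv f (π' s) (π s) :=
  fDiv_compProd_same_kernel f (π s) (π' s) (hP s)

theorem sum_mul_fDiv_pathProb_le {f : ℝ → ℝ} (htri : FDivTriangle f)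
    (hπ : ∀ s, IsPosDist (π s)) (hπ' : ∀ s, IsPosDist (π' s)) (hP : ∀ s a, IsPosDist (P s a))
    {T : ℕ} (hT : 1 ≤ T) (μ : S → ℝ) (hμ : ∀ s, 0 ≤ μ s) :
    ∑ s, μ s * fDiv f (pathProb (T := T) (stepKernel π' P) s) (pathProb (stepKernel π P) s) ≤
      ∑ t ∈ range T, ∑ s, stateDist μ P π t s * fDiv f (π' s) (π s) := by
  have hPsum s a := (hP s a).2
  induction T, hT using Nat.le_induction generalizing μ with
  | base =>
    simp only [fDiv_pathProb_one, fDiv_stepKernel f hPsum, sum_range_one]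
    rfl
  | succ T _ ih =>
    have hk : ∀ s, IsPosDist (stepKernel π P s) := fun s => (hπ s).compProd (hP s)
    have hk' : ∀ s, IsPosDist (stepKernel π' P s) := fun s => (hπ' s).compProd (hP s)
    set dPath := fun s =>
      fDiv f (pathProb (T := T) (stepKernel π' P) s) (pathProb (stepKernel π P) s)
    set dAct := fun s => fDiv f (π' s) (π s)
    have hμ₁ :=
      stateDist_nonneg hμ (fun s a => ((hπ s).1 a).le) (fun s a s' => ((hP s a).1 s').le) 1
    calc ∑ s, μ s * fDiv f (pathProb (stepKernel π' P) s) (pathProb (stepKernel π P) s)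
        ≤ ∑ s, μ s * (dAct s + ∑ x, stepKernel π P s x * dPath x.2) := by
          refine sum_le_sum fun s _ => mul_le_mul_of_nonneg_left ?_ (hμ s)
          refine (fDiv_pathProb_succ_le htri hk hk' T s).trans_eq ?_
          rw [fDiv_stepKernel f hPsum]
      _ = ∑ s, μ s * dAct s + ∑ s', stateDist μ P π 1 s' * dPath s' := by
          rw [sum_stateDist_one_mul, ← sum_add_distrib]
          simp only [mul_add]
      _ ≤ ∑ s, μ s * dAct s +
            ∑ t ∈ range T, ∑ s, stateDist (stateDist μ P π 1) P π t s * dAct s :=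
          add_le_add le_rfl (ih _ hμ₁)
      _ = ∑ t ∈ range (T + 1), ∑ s, stateDist μ P π t s * dAct s := by
          rw [sum_range_succ', add_comm]
          congr 1
          exact sum_congr rfl fun t _ => by rw [stateDist_succ' μ P π t]

end MDP

theorem traj_fdiv_le_action_fdiv_general
    {S A : Type} [Fintype S] [Fintype A]
    (ρ₀ : S → ℝ) (hρ₀pos : ∀ s, 0 < ρ₀ s)
    (P : S → A → S → ℝ) (hPpos : ∀ s a s', 0 < P s a s')
    (hPsum : ∀ s a, ∑ s', P s a s' = 1)
    (T : ℕ) (hT : 1 ≤ T)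
    (π πstar : S → A → ℝ)
    (hπpos : ∀ s a, 0 < π s a) (hπsum : ∀ s, ∑ a, π s a = 1)
    (hπstarpos : ∀ s a, 0 < πstar s a) (hπstarsum : ∀ s, ∑ a, πstar s a = 1)
    (f : ℝ → ℝ)
    (htri : ∀ (X : Type) [Fintype X] [Nonempty X], ∀ p q r : X → ℝ,
      (∀ x, 0 < p x) → (∀ x, 0 < q x) → (∀ x, 0 < r x) →
      (∑ x, p x = 1) → (∑ x, q x = 1) → (∑ x, r x = 1) →
      ∑ x, q x * f (p x / q x) ≤
        (∑ x, r x * f (p x / r x)) + ∑ x, q x * f (r x / q x)) :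
    ∑ τ : S × (Fin T → A × S),
        trajProb ρ₀ P π τ * f (trajProb ρ₀ P πstar τ / trajProb ρ₀ P π τ) ≤
      (T : ℝ) * ∑ s : S, avgStateDist ρ₀ P π T s *
        ∑ a : A, π s a * f (πstar s a / π s a) :=
  calc _ = ∑ s, ρ₀ s * fDiv f (pathProb (stepKernel πstar P) s) (pathProb (stepKernel π P) s) :=
        fDiv_compProd_same_marginal f ρ₀ (fun s => pathProb (stepKernel π P) s)
          (fun s => pathProb (stepKernel πstar P) s)
    _ ≤ ∑ t ∈ range T, ∑ s, stateDist ρ₀ P π t s * fDiv f (πstar s) (π s) :=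
        sum_mul_fDiv_pathProb_le htri (fun s => ⟨hπpos s, hπsum s⟩)
          (fun s => ⟨hπstarpos s, hπstarsum s⟩) (fun s a => ⟨hPpos s a, hPsum s a⟩) hT ρ₀
          fun s => (hρ₀pos s).le
    _ = _ := (mul_sum_avgStateDist_mul ρ₀ P π (by omega) _).symm

/-- **Theorem 4 (upper bound).** If the f-divergence associated to `f` satisfies the
triangle inequality on every finite nonempty set, then the f-divergence between
trajectory distributions is upper bounded by `T` times the expected per-state
action-distribution f-divergence on states induced by `π`. -/
theorem traj_fdiv_le_action_fdiv
    {S A : Type} [Fintype S] [Nonempty S] [Fintype A] [Nonempty A]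
    (ρ₀ : S → ℝ) (hρ₀pos : ∀ s, 0 < ρ₀ s) (hρ₀sum : ∑ s, ρ₀ s = 1)
    (P : S → A → S → ℝ) (hPpos : ∀ s a s', 0 < P s a s')
    (hPsum : ∀ s a, ∑ s', P s a s' = 1)
    (T : ℕ) (hT : 1 ≤ T)
    (π πstar : S → A → ℝ)
    (hπpos : ∀ s a, 0 < π s a) (hπsum : ∀ s, ∑ a, π s a = 1)
    (hπstarpos : ∀ s a, 0 < πstar s a) (hπstarsum : ∀ s, ∑ a, πstar s a = 1)
    (f : ℝ → ℝ) (hf : ConvexOn ℝ (Set.Ici (0 : ℝ)) f)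
    (htri : ∀ (X : Type) [Fintype X] [Nonempty X], ∀ p q r : X → ℝ,
      (∀ x, 0 < p x) → (∀ x, 0 < q x) → (∀ x, 0 < r x) →
      (∑ x, p x = 1) → (∑ x, q x = 1) → (∑ x, r x = 1) →
      ∑ x, q x * f (p x / q x) ≤
        (∑ x, r x * f (p x / r x)) + ∑ x, q x * f (r x / q x)) :
    ∑ τ : S × (Fin T → A × S),
        trajProb ρ₀ P π τ * f (trajProb ρ₀ P πstar τ / trajProb ρ₀ P π τ) ≤
      (T : ℝ) * ∑ s : S, avgStateDist ρ₀ P π T s *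
        ∑ a : A, π s a * f (πstar s a / π s a) :=
  traj_fdiv_le_action_fdiv_general ρ₀ hρ₀pos P hPpos hPsum T hT π πstar hπpos hπsum hπstarpos
    hπstarsum f htri
end
end

section
/- In a finite-horizon MDP, let π and π* be stochastic policies with ρ₀(s) > 0, P(s'|s,a) > 0, π(a|s) > 0 and π*(a|s) > 0 for all s, s', a. Then the reverse KL divergence between trajectory distributions equals T times the expected reverse KL divergence between action distributions on states induced by π: ∑_τ ρ_π(τ)·log(ρ_π(τ)/ρ_{π*}(τ)) = T · ∑_{s∈S} ρ_π(s) · ∑_{a∈A} π(a|s)·log(π(a|s)/π*(a|s)). -/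
noncomputable section

/-!
Taking logarithms, `log (ρ_π(τ) / ρ_{π*}(τ))` is the sum over steps `t` of
`log (π(a_t|s_{t-1}) / π*(a_t|s_{t-1}))`, since the `ρ₀` and `P` factors cancel. Each summand
depends only on the first `t` steps of `τ`: summing out the later steps (the policy and the kernel
are normalised) and the earlier ones leaves the expectation of the action divergence under the
time-`(t-1)` state distribution `ρ_π^{t-1}`. Summing over `t` gives `T` times the average.
-/

section Trajectory

variable {S A : Type*}

def lastState : ∀ {T : ℕ}, S × (Fin T → A × S) → S
  | 0, τ => τ.1
  | _ + 1, τ => (τ.2 (Fin.last _)).2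

def snocTraj {T : ℕ} : (S × (Fin T → A × S)) × (A × S) ≃ S × (Fin (T + 1) → A × S) where
  toFun x := (x.1.1, Fin.snoc x.1.2 x.2)
  invFun τ := ((τ.1, Fin.init τ.2), τ.2 (Fin.last T))
  left_inv x := by simp
  right_inv τ := by simp

@[simp]
lemma lastState_snocTraj {T : ℕ} (τ : S × (Fin T → A × S)) (p : A × S) :
    lastState (snocTraj (τ, p)) = p.2 := by
  simp [snocTraj, lastState]

@[simp]
lemma snocTraj_snd_castSucc {T : ℕ} (τ : S × (Fin T → A × S)) (p : A × S) (t : Fin T) :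
    (snocTraj (τ, p)).2 t.castSucc = τ.2 t := by
  simp [snocTraj]

@[simp]
lemma snocTraj_snd_last {T : ℕ} (τ : S × (Fin T → A × S)) (p : A × S) :
    (snocTraj (τ, p)).2 (Fin.last T) = p := by
  simp [snocTraj]

@[simp]
lemma prevState_snocTraj_castSucc {T : ℕ} (τ : S × (Fin T → A × S)) (p : A × S) (t : Fin T) :
    prevState (snocTraj (τ, p)) t.castSucc = prevState τ t := by
  by_cases h : (t : ℕ) = 0
  · simp [prevState, h, snocTraj]
  · simp only [prevState, Fin.val_castSucc, h, dite_false]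
    exact congrArg Prod.snd (snocTraj_snd_castSucc τ p ⟨t - 1, by omega⟩)

@[simp]
lemma prevState_snocTraj_last {T : ℕ} (τ : S × (Fin T → A × S)) (p : A × S) :
    prevState (snocTraj (τ, p)) (Fin.last T) = lastState τ := by
  cases T with
  | zero => rfl
  | succ T =>
    simp only [prevState, Fin.val_last, Nat.add_one_ne_zero, dite_false, lastState]
    exact congrArg Prod.snd (snocTraj_snd_castSucc τ p (Fin.last T))

lemma trajProb_snocTraj (ρ₀ : S → ℝ) (P : S → A → S → ℝ) (π : S → A → ℝ) {T : ℕ}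
    (τ : S × (Fin T → A × S)) (p : A × S) :
    trajProb ρ₀ P π (snocTraj (τ, p)) =
      trajProb ρ₀ P π τ * (π (lastState τ) p.1 * P (lastState τ) p.1 p.2) := by
  simp only [trajProb, Fin.prod_univ_castSucc, snocTraj_snd_castSucc, snocTraj_snd_last,
    prevState_snocTraj_castSucc, prevState_snocTraj_last]
  simp [snocTraj, mul_assoc]

/-- Where `ρ_π(τ) = 0` both sides vanish; elsewhere the common factors `ρ₀(s₀)` and
`P(s_t|s_{t-1},a_t)` are nonzero and cancel. -/
lemma trajProb_mul_log_div_trajProb (ρ₀ : S → ℝ) (P : S → A → S → ℝ) (π πstar : S → A → ℝ)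
    (hπstar : ∀ s a, πstar s a ≠ 0) {T : ℕ} (τ : S × (Fin T → A × S)) :
    trajProb ρ₀ P π τ * Real.log (trajProb ρ₀ P π τ / trajProb ρ₀ P πstar τ) =
      trajProb ρ₀ P π τ *
        ∑ t, Real.log (π (prevState τ t) (τ.2 t).1 / πstar (prevState τ t) (τ.2 t).1) := by
  rcases eq_or_ne (trajProb ρ₀ P π τ) 0 with hzero | hne
  · simp [hzero]
  obtain ⟨hρ₀, hsteps⟩ := mul_ne_zero_iff.mp hne
  have hstep (t : Fin T) := Finset.prod_ne_zero_iff.mp hsteps t (Finset.mem_univ t)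
  have hratio : trajProb ρ₀ P π τ / trajProb ρ₀ P πstar τ =
      ∏ t, π (prevState τ t) (τ.2 t).1 / πstar (prevState τ t) (τ.2 t).1 := by
    simp only [trajProb]
    rw [mul_div_mul_left _ _ hρ₀, ← Finset.prod_div_distrib]
    refine Finset.prod_congr rfl fun t _ => mul_div_mul_right _ _ (right_ne_zero_of_mul (hstep t))
  rw [hratio, Real.log_prod fun t _ => div_ne_zero (left_ne_zero_of_mul (hstep t)) (hπstar _ _)]

end Trajectory

section Marginals

variable {S A : Type*} [Fintype S] [Fintype A]
  (ρ₀ : S → ℝ) (P : S → A → S → ℝ) (π : S → A → ℝ)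

lemma sum_trajProb_mul_succ {T : ℕ} (F : S × (Fin (T + 1) → A × S) → ℝ) :
    ∑ τ, trajProb ρ₀ P π τ * F τ =
      ∑ τ, trajProb ρ₀ P π τ *
        ∑ p : A × S, π (lastState τ) p.1 * P (lastState τ) p.1 p.2 * F (snocTraj (τ, p)) := by
  rw [← snocTraj.sum_comp, Fintype.sum_prod_type]
  refine Finset.sum_congr rfl fun τ _ => ?_
  rw [Finset.mul_sum]
  refine Finset.sum_congr rfl fun p _ => ?_
  rw [trajProb_snocTraj]
  ring

lemma sum_trajProb_mul_lastState (h : S → ℝ) :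
    ∀ T : ℕ, ∑ τ : S × (Fin T → A × S), trajProb ρ₀ P π τ * h (lastState τ) =
      ∑ s, stateDist ρ₀ P π T s * h s
  | 0 => by simp [Fintype.sum_prod_type, trajProb, lastState, stateDist]
  | T + 1 => by
    rw [sum_trajProb_mul_succ]
    simp only [lastState_snocTraj]
    rw [sum_trajProb_mul_lastState
      (fun s' => ∑ p : A × S, π s' p.1 * P s' p.1 p.2 * h p.2) T]
    simp only [stateDist, Fintype.sum_prod_type, Finset.mul_sum, Finset.sum_mul, mul_assoc]
    conv_rhs => rw [Finset.sum_comm]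
    exact Finset.sum_congr rfl fun _ _ => Finset.sum_comm

variable {P π}

lemma sum_step_mul_action (hPsum : ∀ s a, ∑ s', P s a s' = 1) (s : S) (f : A → ℝ) :
    ∑ p : A × S, π s p.1 * P s p.1 p.2 * f p.1 = ∑ a, π s a * f a := by
  simp only [Fintype.sum_prod_type, mul_right_comm _ _ (f _), ← Finset.mul_sum, hPsum, mul_one]

lemma sum_trajProb_mul_step (hPsum : ∀ s a, ∑ s', P s a s' = 1) (hπsum : ∀ s, ∑ a, π s a = 1)
    (g : S → A → ℝ) :
    ∀ {T : ℕ} (t : Fin T), ∑ τ, trajProb ρ₀ P π τ * g (prevState τ t) (τ.2 t).1 =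
      ∑ s, stateDist ρ₀ P π t s * ∑ a, π s a * g s a
  | 0, t => t.elim0
  | T + 1, t => by
    rw [sum_trajProb_mul_succ]
    induction t using Fin.lastCases with
    | last =>
      simp only [prevState_snocTraj_last, snocTraj_snd_last, sum_step_mul_action hPsum]
      exact sum_trajProb_mul_lastState ρ₀ P π (fun s => ∑ a, π s a * g s a) T
    | cast t =>
      have hnorm (s : S) : ∑ p : A × S, π s p.1 * P s p.1 p.2 = 1 := by
        simpa [hπsum] using sum_step_mul_action (π := π) hPsum s (fun _ => 1)
      simp only [prevState_snocTraj_castSucc, snocTraj_snd_castSucc, ← Finset.sum_mul, hnorm,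
        one_mul]
      exact sum_trajProb_mul_step hPsum hπsum g t

end Marginals

lemma natCast_mul_avgStateDist {S A : Type*} [Fintype S] [Fintype A]
    (ρ₀ : S → ℝ) (P : S → A → S → ℝ) (π : S → A → ℝ) (T : ℕ) (s : S) :
    T * avgStateDist ρ₀ P π T s = ∑ t ∈ Finset.range T, stateDist ρ₀ P π t s := by
  rcases eq_or_ne T 0 with rfl | hT
  · simp
  · rw [avgStateDist, ← mul_assoc, mul_one_div_cancel (Nat.cast_ne_zero.mpr hT), one_mul]

theorem traj_rkl_eq_action_rkl_general
    {S A : Type*} [Fintype S] [Fintype A]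
    (ρ₀ : S → ℝ)
    (P : S → A → S → ℝ)
    (hPsum : ∀ s a, ∑ s', P s a s' = 1)
    (T : ℕ)
    (π πstar : S → A → ℝ)
    (hπsum : ∀ s, ∑ a, π s a = 1)
    (hπstarpos : ∀ s a, 0 < πstar s a) :
    ∑ τ : S × (Fin T → A × S),
        trajProb ρ₀ P π τ * Real.log (trajProb ρ₀ P π τ / trajProb ρ₀ P πstar τ) =
      (T : ℝ) * ∑ s : S, avgStateDist ρ₀ P π T s *
        ∑ a : A, π s a * Real.log (π s a / πstar s a) := by
  set D : S → ℝ := fun s => ∑ a, π s a * Real.log (π s a / πstar s a)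
  calc ∑ τ : S × (Fin T → A × S),
        trajProb ρ₀ P π τ * Real.log (trajProb ρ₀ P π τ / trajProb ρ₀ P πstar τ)
      = ∑ t : Fin T, ∑ τ : S × (Fin T → A × S), trajProb ρ₀ P π τ *
          Real.log (π (prevState τ t) (τ.2 t).1 / πstar (prevState τ t) (τ.2 t).1) := by
        simp only [trajProb_mul_log_div_trajProb ρ₀ P π πstar fun s a => (hπstarpos s a).ne',
          Finset.mul_sum]
        exact Finset.sum_comm
    _ = ∑ t : Fin T, ∑ s, stateDist ρ₀ P π t s * D s :=
        Finset.sum_congr rfl fun t _ =>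
          sum_trajProb_mul_step ρ₀ hPsum hπsum (fun s a => Real.log (π s a / πstar s a)) t
    _ = ∑ t ∈ Finset.range T, ∑ s, stateDist ρ₀ P π t s * D s :=
        Fin.sum_univ_eq_sum_range (fun t => ∑ s, stateDist ρ₀ P π t s * D s) T
    _ = (T : ℝ) * ∑ s, avgStateDist ρ₀ P π T s * D s := by
        simp only [Finset.mul_sum, ← mul_assoc, natCast_mul_avgStateDist, Finset.sum_mul]
        exact Finset.sum_comm

/-- **Reverse KL identity.** The reverse KL divergence between trajectory distributions
equals `T` times the expected reverse KL divergence between action distributions on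
states induced by `π`. -/
theorem traj_rkl_eq_action_rkl
    {S A : Type*} [Fintype S] [Nonempty S] [Fintype A] [Nonempty A]
    (ρ₀ : S → ℝ) (hρ₀pos : ∀ s, 0 < ρ₀ s) (hρ₀sum : ∑ s, ρ₀ s = 1)
    (P : S → A → S → ℝ) (hPpos : ∀ s a s', 0 < P s a s')
    (hPsum : ∀ s a, ∑ s', P s a s' = 1)
    (T : ℕ) (hT : 1 ≤ T)
    (π πstar : S → A → ℝ)
    (hπpos : ∀ s a, 0 < π s a) (hπsum : ∀ s, ∑ a, π s a = 1)
    (hπstarpos : ∀ s a, 0 < πstar s a) (hπstarsum : ∀ s, ∑ a, πstar s a = 1) :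
    ∑ τ : S × (Fin T → A × S),
        trajProb ρ₀ P π τ * Real.log (trajProb ρ₀ P π τ / trajProb ρ₀ P πstar τ) =
      (T : ℝ) * ∑ s : S, avgStateDist ρ₀ P π T s *
        ∑ a : A, π s a * Real.log (π s a / πstar s a) :=
  traj_rkl_eq_action_rkl_general ρ₀ P hPsum T π πstar hπsum hπstarpos

end
end
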